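/- Energy conservation of the mass–energy conservative (MEC) scheme in the deterministic case: let Δt > 0, let σ ≥ 1 be an integer, and let u⁰, u¹ ∈ ℂ^{N+1}. Assume there exist real numbers V_0, …, V_N such that V_j·(|u¹_j|² − |u⁰_j|²) = (1/(σ+1))·(|u¹_j|^{2(σ+1)} − |u⁰_j|^{2(σ+1)}) for every 0 ≤ j ≤ N, and that for every 0 ≤ j ≤ N one has i·(u¹_j − u⁰_j)/Δt + D₂u^{1/2}_j + V_j·u^{1/2}_j = 0, where u^{1/2}_j := (u⁰_j + u¹_j)/2 (extended by the Neumann conventions). Then the discrete energy is conserved: H_dis[u¹] = H_dis[u⁰]. -/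

import Mathlib

open Finset

/-- Extended mesh size `Δx_j` for `j ∈ {-1, 0, …, N}`, with the conventions
`Δx_{-1} := Δx_0` and `Δx_N := Δx_{N-1}`. -/
noncomputable def meshDx (N : ℕ) (x : ℕ → ℝ) (j : ℤ) : ℝ :=
  if j ≤ 0 then x 1 - x 0
  else if (N : ℤ) ≤ j then x N - x (N - 1)
  else x (j.toNat + 1) - x j.toNat

/-- Neumann extension of a vector `u ∈ ℂ^{N+1}`: `u_{-1} := u_0`, `u_{N+1} := u_N`. -/
noncomputable def neumannExt (N : ℕ) (u : ℕ → ℂ) (j : ℤ) : ℂ :=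
  if j ≤ 0 then u 0
  else if (N : ℤ) ≤ j then u N
  else u j.toNat

/-- Discrete second-difference operator on the (possibly non-uniform) mesh. -/
noncomputable def D2 (N : ℕ) (x : ℕ → ℝ) (u : ℕ → ℂ) (j : ℕ) : ℂ :=
  2 * neumannExt N u ((j : ℤ) - 1) /
      ((meshDx N x ((j : ℤ) - 1) : ℂ) * ((meshDx N x ((j : ℤ) - 1) : ℂ) + (meshDx N x (j : ℤ) : ℂ)))
    - 2 * neumannExt N u (j : ℤ) / ((meshDx N x ((j : ℤ) - 1) : ℂ) * (meshDx N x (j : ℤ) : ℂ))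
    + 2 * neumannExt N u ((j : ℤ) + 1) /
      (((meshDx N x ((j : ℤ) - 1) : ℂ) + (meshDx N x (j : ℤ) : ℂ)) * (meshDx N x (j : ℤ) : ℂ))

/-- Discrete mass `M_dis[u] = (1/2)·Σ_{j=0}^{N} |u_j|²·(Δx_j + Δx_{j-1})`. -/
noncomputable def Mdis (N : ℕ) (x : ℕ → ℝ) (u : ℕ → ℂ) : ℝ :=
  (1 / 2) * ∑ j ∈ Finset.range (N + 1),
    ‖u j‖ ^ 2 * (meshDx N x (j : ℤ) + meshDx N x ((j : ℤ) - 1))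

/-- Discrete energy
`H_dis[u] = (1/2)·Σ_{j=0}^{N} |u_{j+1}-u_j|²/Δx_j
  - (1/(2(σ+1)))·Σ_{j=0}^{N} ((Δx_j+Δx_{j-1})/2)·|u_j|^{2(σ+1)}`
(the value `u_{N+1}` being given by the Neumann convention). -/
noncomputable def Hdis (N : ℕ) (x : ℕ → ℝ) (σ : ℕ) (u : ℕ → ℂ) : ℝ :=
  (1 / 2) * ∑ j ∈ Finset.range (N + 1),
      ‖neumannExt N u ((j : ℤ) + 1) - u j‖ ^ 2 / meshDx N x (j : ℤ)
    - (1 / (2 * ((σ : ℝ) + 1))) * ∑ j ∈ Finset.range (N + 1),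
      ((meshDx N x (j : ℤ) + meshDx N x ((j : ℤ) - 1)) / 2) * ‖u j‖ ^ (2 * (σ + 1))

/-!
Pair the scheme at node `j` with `conj (u¹_j - u⁰_j)`, weight it by the dual cell length and take
real parts. The time-difference term `i |u¹_j - u⁰_j|² / Δt` is purely imaginary, and the
potential term gives `V_j (|u¹_j|² - |u⁰_j|²) / 2`, i.e. by the choice of `V` the change of the
nonlinear energy. Weighted by the dual cells, `D₂` is a difference of forward quotients; summing by
parts (the Neumann conditions kill the boundary terms) turns the `D₂` term into the change of the
kinetic energy, because `Re ((a + b) · conj (a - b)) = |a|² - |b|²`.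
-/

open ComplexConjugate

section Mesh

variable {N : ℕ} {x : ℕ → ℝ}

theorem meshDx_pos (hN : 1 ≤ N) (hx : ∀ j, j < N → x j < x (j + 1)) (k : ℤ) :
    0 < meshDx N x k := by
  unfold meshDx
  split_ifs
  · simpa using hx 0 hN
  · simpa [Nat.sub_add_cancel hN] using hx (N - 1) (by omega)
  · simpa using hx k.toNat (by omega)

theorem neumannExt_natCast {u : ℕ → ℂ} {j : ℕ} (hj : j ≤ N) : neumannExt N u j = u j := by
  unfold neumannExt
  split_ifs <;> congr 1 <;> omega

theorem neumannExt_of_nonpos {u : ℕ → ℂ} {k : ℤ} (hk : k ≤ 0) : neumannExt N u k = u 0 :=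
  if_pos hk

theorem neumannExt_natCast_add_one_self {u : ℕ → ℂ} : neumannExt N u (N + 1) = u N := by
  unfold neumannExt
  split_ifs <;> first | rfl | omega

/-- The length of the dual cell `[x_{j-1/2}, x_{j+1/2}]`, the quadrature weight of `Hdis`. -/
noncomputable def meshWeight (N : ℕ) (x : ℕ → ℝ) (j : ℕ) : ℝ :=
  (meshDx N x j + meshDx N x (j - 1)) / 2

noncomputable def fwdQuot (N : ℕ) (x : ℕ → ℝ) (u : ℕ → ℂ) (k : ℤ) : ℂ :=
  (neumannExt N u (k + 1) - neumannExt N u k) / meshDx N x k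

theorem fwdQuot_natCast {u : ℕ → ℂ} {j : ℕ} (hj : j < N) :
    fwdQuot N x u j = (u (j + 1) - u j) / meshDx N x j := by
  rw [fwdQuot, ← Nat.cast_succ, neumannExt_natCast hj, neumannExt_natCast hj.le]

theorem fwdQuot_neg_one (u : ℕ → ℂ) : fwdQuot N x u (-1) = 0 := by
  simp [fwdQuot, neumannExt_of_nonpos]

theorem fwdQuot_natCast_self (u : ℕ → ℂ) : fwdQuot N x u N = 0 := by
  simp [fwdQuot, neumannExt_natCast_add_one_self, neumannExt_natCast le_rfl]

theorem half_add_mul_threePoint {K : Type*} [Field K] [NeZero (2 : K)] {a b : K} (ha : a ≠ 0)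
    (hb : b ≠ 0) (hab : a + b ≠ 0) (p q r : K) :
    (b + a) / 2 * (2 * p / (a * (a + b)) - 2 * q / (a * b) + 2 * r / ((a + b) * b))
      = (r - q) / b - (q - p) / a := by
  field_simp
  ring

theorem meshWeight_mul_D2 (hpos : ∀ k, 0 < meshDx N x k) (u : ℕ → ℂ) (j : ℕ) :
    (meshWeight N x j : ℂ) * D2 N x u j = fwdQuot N x u j - fwdQuot N x u (j - 1) := by
  have hne (k : ℤ) : (meshDx N x k : ℂ) ≠ 0 := Complex.ofReal_ne_zero.mpr (hpos k).ne'
  have hsum : (meshDx N x (j - 1) : ℂ) + meshDx N x j ≠ 0 := by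
    exact_mod_cast (add_pos (hpos _) (hpos _)).ne'
  rw [meshWeight, D2, fwdQuot, fwdQuot, sub_add_cancel]
  push_cast
  exact half_add_mul_threePoint (hne _) (hne _) hsum _ _ _

end Mesh

theorem sum_range_succ_sub_mul_eq_neg {R : Type*} [CommRing R] (F : ℤ → R) (v : ℕ → R) (n : ℕ)
    (h₀ : F (-1) = 0) (hn : F n = 0) :
    ∑ j ∈ range (n + 1), (F j - F (j - 1)) * v j = -∑ j ∈ range n, F j * (v (j + 1) - v j) := by
  simp only [sub_mul, sum_sub_distrib, mul_sub, neg_sub]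
  rw [sum_range_succ, hn, sum_range_succ', Nat.cast_zero, zero_sub, h₀]
  simp

section Energy

variable {N : ℕ} {x : ℕ → ℝ}

theorem sum_meshWeight_mul_D2_mul (hpos : ∀ k, 0 < meshDx N x k) (u v : ℕ → ℂ) :
    ∑ j ∈ range (N + 1), (meshWeight N x j : ℂ) * D2 N x u j * v j
      = -∑ j ∈ range N, (u (j + 1) - u j) / meshDx N x j * (v (j + 1) - v j) := by
  simp_rw [meshWeight_mul_D2 hpos]
  rw [sum_range_succ_sub_mul_eq_neg _ _ _ (fwdQuot_neg_one u) (fwdQuot_natCast_self u)]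
  congr 1
  refine sum_congr rfl fun j hj => ?_
  rw [fwdQuot_natCast (mem_range.mp hj)]

noncomputable def kineticEnergy (N : ℕ) (x : ℕ → ℝ) (u : ℕ → ℂ) : ℝ :=
  1 / 2 * ∑ j ∈ range N, ‖u (j + 1) - u j‖ ^ 2 / meshDx N x j

theorem Hdis_eq (σ : ℕ) (u : ℕ → ℂ) :
    Hdis N x σ u = kineticEnergy N x u
      - 1 / (2 * ((σ : ℝ) + 1))
        * ∑ j ∈ range (N + 1), meshWeight N x j * ‖u j‖ ^ (2 * (σ + 1)) := by
  rw [Hdis, kineticEnergy, sum_range_succ _ N, neumannExt_natCast_add_one_self, sub_self,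
    norm_zero]
  congr 2
  simp only [ne_eq, OfNat.ofNat_ne_zero, not_false_eq_true, zero_pow, zero_div, add_zero]
  refine sum_congr rfl fun j hj => ?_
  rw [← Nat.cast_succ, neumannExt_natCast (mem_range.mp hj)]

theorem re_add_mul_conj_sub (a b : ℂ) : ((a + b) * conj (a - b)).re = ‖a‖ ^ 2 - ‖b‖ ^ 2 := by
  simp only [Complex.mul_re, Complex.conj_re, Complex.conj_im, Complex.add_re, Complex.add_im,
    Complex.sub_re, Complex.sub_im, Complex.sq_norm, Complex.normSq_apply]
  ring

theorem kineticEnergy_sub (hpos : ∀ k, 0 < meshDx N x k) (u₀ u₁ : ℕ → ℂ) :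
    kineticEnergy N x u₁ - kineticEnergy N x u₀
      = -(∑ j ∈ range (N + 1), (meshWeight N x j : ℂ) * D2 N x (fun k => (u₀ k + u₁ k) / 2) j
          * conj (u₁ j - u₀ j)).re := by
  rw [sum_meshWeight_mul_D2_mul hpos, Complex.neg_re, neg_neg, Complex.re_sum, kineticEnergy,
    kineticEnergy, ← mul_sub, ← sum_sub_distrib, mul_sum]
  refine sum_congr rfl fun j _ => ?_
  have hsplit : ((u₀ (j + 1) + u₁ (j + 1)) / 2 - (u₀ j + u₁ j) / 2) / (meshDx N x j : ℂ)
      * (conj (u₁ (j + 1) - u₀ (j + 1)) - conj (u₁ j - u₀ j))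
      = ((u₁ (j + 1) - u₁ j + (u₀ (j + 1) - u₀ j))
          * conj (u₁ (j + 1) - u₁ j - (u₀ (j + 1) - u₀ j))) / (2 * meshDx N x j : ℝ) := by
    push_cast
    simp only [map_sub]
    ring
  rw [hsplit, Complex.div_ofReal_re, re_add_mul_conj_sub]
  ring

end Energy

theorem re_mul_conj_of_scheme {δ d w : ℂ} {τ V : ℝ} (h : Complex.I * δ / τ + d + V * w = 0) :
    (d * conj δ).re = -(V * (w * conj δ).re) := by
  have hd : d * conj δ = -(Complex.I * (Complex.normSq δ : ℂ) / τ) - V * (w * conj δ) := by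
    rw [Complex.normSq_eq_conj_mul_self]
    linear_combination conj δ * h
  rw [hd, Complex.sub_re, Complex.neg_re, Complex.re_ofReal_mul, Complex.div_ofReal_re]
  simp

theorem mec_scheme_energy_conservation_general
    (N : ℕ) (hN : 1 ≤ N) (x : ℕ → ℝ) (hx : ∀ j, j < N → x j < x (j + 1))
    (Δt : ℝ)
    (σ : ℕ) (u0 u1 : ℕ → ℂ) (V : ℕ → ℝ)
    (hV : ∀ j ≤ N, V j * (‖u1 j‖ ^ 2 - ‖u0 j‖ ^ 2)
      = (1 / ((σ : ℝ) + 1)) * (‖u1 j‖ ^ (2 * (σ + 1)) - ‖u0 j‖ ^ (2 * (σ + 1))))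
    (hscheme : ∀ j ≤ N,
      Complex.I * (u1 j - u0 j) / (Δt : ℂ)
        + D2 N x (fun k => (u0 k + u1 k) / 2) j
        + (V j : ℂ) * ((u0 j + u1 j) / 2) = 0) :
    Hdis N x σ u1 = Hdis N x σ u0 := by
  have hpot : ∀ j ∈ range (N + 1),
      ((meshWeight N x j : ℂ) * D2 N x (fun k => (u0 k + u1 k) / 2) j * conj (u1 j - u0 j)).re
        = -(1 / (2 * ((σ : ℝ) + 1))) * (meshWeight N x j
            * ‖u1 j‖ ^ (2 * (σ + 1)) - meshWeight N x j * ‖u0 j‖ ^ (2 * (σ + 1))) := by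
    intro j hj
    have hjN : j ≤ N := Nat.lt_succ_iff.mp (mem_range.mp hj)
    rw [mul_assoc, Complex.re_ofReal_mul, re_mul_conj_of_scheme (hscheme j hjN), add_comm (u0 j),
      div_mul_eq_mul_div, Complex.div_ofNat_re, re_add_mul_conj_sub, ← one_div_mul_one_div]
    linear_combination (-meshWeight N x j / 2) * hV j hjN
  have hkin := kineticEnergy_sub (meshDx_pos hN hx) u0 u1
  rw [Complex.re_sum, sum_congr rfl hpot, ← mul_sum, sum_sub_distrib] at hkin
  rw [Hdis_eq, Hdis_eq]
  linear_combination hkin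

/-- Energy conservation for the mass–energy conservative (MEC) scheme in the
deterministic case. -/
theorem mec_scheme_energy_conservation
    (N : ℕ) (hN : 1 ≤ N) (x : ℕ → ℝ) (hx : ∀ j, j < N → x j < x (j + 1))
    (Δt : ℝ) (hΔt : 0 < Δt)
    (σ : ℕ) (hσ : 1 ≤ σ) (u0 u1 : ℕ → ℂ) (V : ℕ → ℝ)
    (hV : ∀ j ≤ N, V j * (‖u1 j‖ ^ 2 - ‖u0 j‖ ^ 2)
      = (1 / ((σ : ℝ) + 1)) * (‖u1 j‖ ^ (2 * (σ + 1)) - ‖u0 j‖ ^ (2 * (σ + 1))))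
    (hscheme : ∀ j ≤ N,
      Complex.I * (u1 j - u0 j) / (Δt : ℂ)
        + D2 N x (fun k => (u0 k + u1 k) / 2) j
        + (V j : ℂ) * ((u0 j + u1 j) / 2) = 0) :
    Hdis N x σ u1 = Hdis N x σ u0 :=
  mec_scheme_energy_conservation_general N hN x hx Δt σ u0 u1 V hV hscheme
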